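/- For every face chain F_1 ⊴ F_2 ⊴ … ⊴ F_k in the associahedron K(n) (n ≥ 2, k ≥ 1), the total dimension satisfies Σ_{i=1}^k dim F_i ≤ ⌈k/2⌉·(n − 2). -/
import Mathlib


/-- Plane binary trees: a single leaf, or `V₁ ∧ V₂` for plane binary trees `V₁, V₂`. -/
inductive PBT : Type
  | leaf : PBT
  | node : PBT → PBT → PBT

/-- Number of leaves of a plane binary tree. -/
def PBT.leaves : PBT → ℕ
  | .leaf => 1
  | .node a b => a.leaves + b.leaves

/-- `1` if the root is an internal vertex, `0` if it is a leaf. -/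
def PBT.isInternal : PBT → ℕ
  | .leaf => 0
  | .node _ _ => 1

/-- Number of left-leaning internal edges: edges joining an internal vertex to
its left child, that child being internal as well. -/
def PBT.leftE : PBT → ℕ
  | .leaf => 0
  | .node a b => a.leftE + b.leftE + a.isInternal

/-- Number of right-leaning internal edges: edges joining an internal vertex to
its right child, that child being internal as well. -/
def PBT.rightE : PBT → ℕ
  | .leaf => 0
  | .node a b => a.rightE + b.rightE + b.isInternal

/-- One right rotation applied to some subtree: somewhere a subtree
`(a ∧ b) ∧ c` is replaced by `a ∧ (b ∧ c)`. -/
inductive RightRot : PBT → PBT → Prop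
  | rot (a b c : PBT) : RightRot (.node (.node a b) c) (.node a (.node b c))
  | left {a a' : PBT} (b : PBT) : RightRot a a' → RightRot (.node a b) (.node a' b)
  | right (a : PBT) {b b' : PBT} : RightRot b b' → RightRot (.node a b) (.node a b')

/-- The Tamari order: reflexive-transitive closure of right rotation. -/
def Tamari : PBT → PBT → Prop := Relation.ReflTransGen RightRot

mutual
  /-- Schröder trees: plane rooted trees in which every internal vertex has at
  least two children (encoding faces of associahedra). -/
  inductive STree : Type
    | leaf : STree
    | node : SForest → STree
  /-- Lists of at least two Schröder trees (children of an internal vertex). -/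
  inductive SForest : Type
    | two : STree → STree → SForest
    | cons : STree → SForest → SForest
end

mutual
  /-- Number of leaves of a Schröder tree. -/
  def STree.leavesS : STree → ℕ
    | .leaf => 1
    | .node f => f.leavesF
  def SForest.leavesF : SForest → ℕ
    | .two a b => a.leavesS + b.leavesS
    | .cons a f => a.leavesS + f.leavesF
end

mutual
  /-- Number of internal vertices of a Schröder tree. -/
  def STree.vS : STree → ℕ
    | .leaf => 0
    | .node f => 1 + f.vF
  def SForest.vF : SForest → ℕ
    | .two a b => a.vS + b.vS
    | .cons a f => a.vS + f.vF
end

mutual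
  /-- `top t`: the binary tree obtained by recursively replacing each internal
  vertex with children `t₁, …, t_c` by the right comb `t₁ ∧ (t₂ ∧ (… ∧ t_c))`. -/
  def STree.top : STree → PBT
    | .leaf => .leaf
    | .node f => f.topF
  def SForest.topF : SForest → PBT
    | .two a b => .node a.top b.top
    | .cons a f => .node a.top f.topF
end

mutual
  /-- `bottom t`: the binary tree obtained by recursively replacing each internal
  vertex with children `t₁, …, t_c` by the left comb `((…(t₁ ∧ t₂)…) ∧ t_c)`. -/
  def STree.bottom : STree → PBT
    | .leaf => .leaf
    | .node f => f.bottomF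
  def SForest.bottomF : SForest → PBT
    | .two a b => .node a.bottom b.bottom
    | .cons a f => SForest.bottomAux a.bottom f
  def SForest.bottomAux : PBT → SForest → PBT
    | acc, .two a b => .node (.node acc a.bottom) b.bottom
    | acc, .cons a f => SForest.bottomAux (.node acc a.bottom) f
end

/-! ### Auxiliary lemmas -/

theorem RightRot.isInternal_eq {a b : PBT} (h : RightRot a b) :
    a.isInternal = 1 ∧ b.isInternal = 1 := by
  cases h <;> exact ⟨rfl, rfl⟩

theorem RightRot.leftE_le {a b : PBT} (h : RightRot a b) : b.leftE ≤ a.leftE := by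
  induction h with
  | rot a b c =>
      cases b <;> simp [PBT.leftE, PBT.isInternal] <;> omega
  | left b h ih =>
      obtain ⟨h1, h2⟩ := h.isInternal_eq
      simp [PBT.leftE, h1, h2]; omega
  | right a h ih =>
      simp [PBT.leftE]; omega

theorem Tamari.leftE_le {a b : PBT} (h : Tamari a b) : b.leftE ≤ a.leftE := by
  induction h with
  | refl => exact le_refl _
  | tail _ h ih => exact le_trans h.leftE_le ih

mutual
theorem STree.top_leftE_le : ∀ t : STree, t.top.leftE + t.top.isInternal ≤ t.vS
  | .leaf => by simp [STree.top, PBT.leftE, PBT.isInternal, STree.vS]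
  | .node f => by
      have hf := SForest.topF_leftE_le f
      have hint : f.topF.isInternal = 1 := by
        cases f <;> simp [SForest.topF, PBT.isInternal]
      simp only [STree.top, STree.vS]
      omega
theorem SForest.topF_leftE_le : ∀ f : SForest, f.topF.leftE ≤ f.vF
  | .two a b => by
      have ha := STree.top_leftE_le a
      have hb := STree.top_leftE_le b
      simp only [SForest.topF, PBT.leftE, SForest.vF]
      omega
  | .cons a f => by
      have ha := STree.top_leftE_le a
      have hf := SForest.topF_leftE_le f
      simp only [SForest.topF, PBT.leftE, SForest.vF]
      omega
end

mutual
theorem STree.leaves_le_bottom : ∀ t : STree, t.leavesS ≤ t.bottom.leftE + t.vS + 1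
  | .leaf => by simp [STree.leavesS, STree.bottom, PBT.leftE, STree.vS]
  | .node f => by
      have hf := SForest.leaves_le_bottomF f
      simp only [STree.leavesS, STree.bottom, STree.vS]
      omega
theorem SForest.leaves_le_bottomF : ∀ f : SForest, f.leavesF ≤ f.bottomF.leftE + f.vF + 2
  | .two a b => by
      have ha := STree.leaves_le_bottom a
      have hb := STree.leaves_le_bottom b
      simp only [SForest.leavesF, SForest.bottomF, PBT.leftE, SForest.vF]
      omega
  | .cons a f => by
      have ha := STree.leaves_le_bottom a
      have hf := SForest.leaves_le_bottomAux f a.bottom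
      have hint : a.bottom.isInternal ≤ 1 := by
        cases a.bottom <;> simp [PBT.isInternal]
      simp only [SForest.leavesF, SForest.bottomF, SForest.vF]
      omega
theorem SForest.leaves_le_bottomAux : ∀ (f : SForest) (acc : PBT),
    acc.leftE + acc.isInternal + f.leavesF ≤ (SForest.bottomAux acc f).leftE + f.vF + 1
  | .two a b, acc => by
      have ha := STree.leaves_le_bottom a
      have hb := STree.leaves_le_bottom b
      simp only [SForest.bottomAux, PBT.leftE, SForest.leavesF, SForest.vF, PBT.isInternal]
      omega
  | .cons a f, acc => by
      have ha := STree.leaves_le_bottom a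
      have hf := SForest.leaves_le_bottomAux f (.node acc a.bottom)
      have hi : (PBT.node acc a.bottom).isInternal = 1 := rfl
      simp only [PBT.leftE, hi] at hf
      simp only [SForest.bottomAux, SForest.leavesF, SForest.vF]
      omega
end

theorem STree.top_isInternal_of_node (f : SForest) : (STree.node f).top.isInternal = 1 := by
  cases f <;> simp [STree.top, SForest.topF, PBT.isInternal]

/-- Summation lemma: if each term is `≤ M` and each pair of consecutive terms sums
to `≤ M`, then the total is at most `⌈k/2⌉ * M`. -/
theorem sum_chain_le (M : ℕ) : ∀ k (d : Fin k → ℕ), (∀ i, d i ≤ M) →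
    (∀ i j : Fin k, (i : ℕ) + 1 = (j : ℕ) → d i + d j ≤ M) →
    ∑ i, d i ≤ ((k + 1) / 2) * M := by
  intro k
  induction k using Nat.strong_induction_on with
  | _ k ih =>
    match k with
    | 0 => intro d _ _; simp
    | 1 => intro d h1 _; simpa using h1 0
    | (m + 2) =>
      intro d h1 h2
      have hsum : ∑ i : Fin (m + 2), d i
          = d 0 + ((fun i : Fin (m + 1) => d i.succ) 0
            + ∑ i : Fin m, d i.succ.succ) := by
        rw [Fin.sum_univ_succ, Fin.sum_univ_succ]
      have hrec := ih m (by omega) (fun i => d i.succ.succ) (fun i => h1 _)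
        (fun i j hij => h2 i.succ.succ j.succ.succ (by
          simp only [Fin.val_succ]; omega))
      have h01 : d 0 + d (0 : Fin (m + 1)).succ ≤ M := by
        apply h2
        simp
      have harith : (m + 2 + 1) / 2 = (m + 1) / 2 + 1 := by omega
      rw [hsum, harith, add_mul, one_mul]
      simp only at h01 hrec ⊢
      omega

/-- Pairwise bound: consecutive faces satisfy `n ≤ v(F) + v(G)`. -/
theorem pair_v_bound {n : ℕ} (hn : 2 ≤ n) {s t : STree}
    (hs : s.leavesS = n) (ht : t.leavesS = n)
    (h : Tamari s.top t.bottom) : n ≤ s.vS + t.vS := by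
  obtain ⟨f, rfl⟩ : ∃ f, s = STree.node f := by
    cases s with
    | leaf => simp [STree.leavesS] at hs; omega
    | node f => exact ⟨f, rfl⟩
  have h1 := STree.top_leftE_le (STree.node f)
  rw [STree.top_isInternal_of_node] at h1
  have h2 := STree.leaves_le_bottom t
  have h3 := h.leftE_le
  omega

/-- For every face chain `F_1 ⊴ F_2 ⊴ … ⊴ F_k` in the associahedron `K(n)`
(faces encoded by Schröder trees with `n` leaves, `dim t = n − 1 − v(t)`, and
`F ⊴ G` meaning `top F ≤ bottom G` in the Tamari order), the total dimension
satisfies `Σ_i dim F_i ≤ ⌈k/2⌉ (n − 2)`. -/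
theorem face_chain_total_dim_le (n k : ℕ) (hn : 2 ≤ n) (hk : 1 ≤ k)
    (F : Fin k → STree) (hleaves : ∀ i, (F i).leavesS = n)
    (hchain : ∀ i j : Fin k, (i : ℕ) + 1 = (j : ℕ) → Tamari (F i).top (F j).bottom) :
    ∑ i : Fin k, (n - 1 - (F i).vS) ≤ ((k + 1) / 2) * (n - 2) := by
  have hv : ∀ i, 1 ≤ (F i).vS := by
    intro i
    have := hleaves i
    cases h : F i with
    | leaf => rw [h] at this; simp [STree.leavesS] at this; omega
    | node f => simp [STree.vS]
  apply sum_chain_le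
  · intro i
    have := hv i
    omega
  · intro i j hij
    have hp := pair_v_bound hn (hleaves i) (hleaves j) (hchain i j hij)
    have := hv i
    have := hv j
    omega
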